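/- If u·v is a factor of w^m for some primitive word w, then exp_w(u·v) equals exp_w(u) + exp_w(v) or exp_w(u) + exp_w(v) + 1. -/

import Mathlib

/-!
Place `u ++ v` inside `w^m` so that `u`, `v` occupy the positions `[i, j)` and `[j, l)`.
A primitive word occurs in its square only as prefix and suffix: otherwise `w = xy = yx` with
`x, y` nonempty, and the Fine–Wilf periodicity lemma gives `w` the proper period
`gcd |x| |y|` dividing `|w|`. Hence every occurrence of `w` in `w^m` starts at a multiple of `|w|`,
and the exponent of `w` in the factor occupying `[i, l)` is the number of whole blocks inside it,
`⌊l / |w|⌋ - ⌈i / |w|⌉`. The claim then reduces to `⌊j / |w|⌋ ≤ ⌈j / |w|⌉ ≤ ⌊j / |w|⌋ + 1`.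
-/

/-- `wpow w n` is the `n`-fold concatenation `w^n` of the word `w` (a list), with `w^0 = []`. -/
def wpow {α : Type*} (w : List α) (n : ℕ) : List α := (List.replicate n w).flatten

/-- A nonempty word is primitive if it is not a power of any word other than itself. -/
def Primitive {α : Type*} (w : List α) : Prop :=
  w ≠ [] ∧ ∀ (z : List α) (m : ℕ), z ≠ [] → w = wpow z m → w = z

/-- `expw w u` is the maximal `m` such that `w^m` is a factor of `u`. -/
noncomputable def expw {α : Type*} (w u : List α) : ℕ := sSup {m : ℕ | wpow w m <:+: u}

/-- Two words are conjugate if `w = x·y` and `v = y·x`. -/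
def Conj {α : Type*} (w v : List α) : Prop := ∃ x y : List α, w = x ++ y ∧ v = y ++ x

open List

section Words

variable {α : Type*}

theorem wpow_zero (w : List α) : wpow w 0 = [] := rfl

theorem wpow_succ (w : List α) (k : ℕ) : wpow w (k + 1) = w ++ wpow w k := by
  simp [wpow, replicate_succ]

theorem wpow_add (w : List α) (a b : ℕ) : wpow w (a + b) = wpow w a ++ wpow w b := by
  induction a with
  | zero => rw [Nat.zero_add, wpow_zero, nil_append]
  | succ a ih => rw [Nat.succ_add, wpow_succ, wpow_succ, ih, append_assoc]

theorem length_wpow (w : List α) (k : ℕ) : (wpow w k).length = k * w.length := by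
  simp [wpow, length_flatten]

theorem getElem?_wpow (w : List α) {k i : ℕ} (h : i < k * w.length) :
    (wpow w k)[i]? = w[i % w.length]? := by
  induction k generalizing i with
  | zero => simp at h
  | succ k ih =>
    rw [wpow_succ]
    rcases lt_or_ge i w.length with hi | hi
    · rw [getElem?_append_left hi, Nat.mod_eq_of_lt hi]
    · rw [getElem?_append_right hi, ih (by rw [Nat.succ_mul] at h; omega), Nat.mod_eq_sub_mod hi]

theorem List.HasPeriod.eq_wpow_take {w : List α} {d : ℕ} (hper : w.HasPeriod d)
    (hd : d ∣ w.length) : w = wpow (w.take d) (w.length / d) := by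
  rcases eq_or_ne w [] with rfl | hw
  · simp [wpow_zero]
  have hd0 : 0 < d := Nat.pos_of_dvd_of_pos hd (length_pos_iff.mpr hw)
  have hlen : (w.take d).length = d := by simp [Nat.le_of_dvd (length_pos_iff.mpr hw) hd]
  have hdiv : w.length / d * d = w.length := Nat.div_mul_cancel hd
  apply ext_getElem?
  intro i
  rcases lt_or_ge i w.length with hi | hi
  · rw [getElem?_wpow _ (by rwa [hlen, hdiv]), hlen,
      getElem?_take_of_lt (Nat.mod_lt _ hd0)]
    exact hasPeriod_iff_forall_getElem?_mod.mp hper i hi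
  · rw [getElem?_eq_none hi, getElem?_eq_none (by rwa [length_wpow, hlen, hdiv])]

theorem hasPeriod_length_of_append_comm {x y : List α} (h : x ++ y = y ++ x) :
    (x ++ y).HasPeriod x.length := by
  refine ⟨x, ?_⟩
  rw [take_left, append_assoc, ← h]

theorem Primitive.eq_nil_or_eq_nil_of_append_comm {x y : List α} (hw : Primitive (x ++ y))
    (h : x ++ y = y ++ x) : x = [] ∨ y = [] := by
  by_contra! hxy
  have hx : 0 < x.length := length_pos_iff.mpr hxy.1
  have hy : 0 < y.length := length_pos_iff.mpr hxy.2
  set d := x.length.gcd y.length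
  have hper : (x ++ y).HasPeriod d :=
    (hasPeriod_length_of_append_comm h).gcd
      (h ▸ hasPeriod_length_of_append_comm h.symm) (by simp)
  have hdvd : d ∣ (x ++ y).length := by
    rw [length_append]; exact Nat.dvd_add (Nat.gcd_dvd_left _ _) (Nat.gcd_dvd_right _ _)
  have hd : 0 < d := Nat.gcd_pos_of_pos_left _ hx
  have htake : (x ++ y).take d ≠ [] := by simp [hd.ne', hxy.1]
  have hself := hw.2 _ _ htake (hper.eq_wpow_take hdvd)
  have hdx : d ≤ x.length := Nat.gcd_le_left _ hx
  have hlen := congrArg length hself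
  simp only [length_take, length_append] at hlen
  omega

theorem Primitive.eq_nil_or_eq_of_append_prefix {w s : List α} (hw : Primitive w)
    (h : s ++ w <+: w ++ w) : s = [] ∨ s = w := by
  obtain ⟨t, ht⟩ := h
  have hlen := congrArg length ht
  simp only [length_append] at hlen
  have hsw : s <+: w :=
    prefix_of_prefix_length_le ⟨w ++ t, by rw [← ht, append_assoc]⟩ (prefix_append w w)
      (by omega)
  obtain ⟨y, rfl⟩ := hsw
  have hcomm : s ++ y = y ++ s := by
    simp only [append_assoc, append_cancel_left_eq] at ht
    exact (append_inj (by simpa only [append_assoc] using ht) (by simp; omega)).1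
  rcases hw.eq_nil_or_eq_nil_of_append_comm hcomm with hs | rfl
  · exact .inl hs
  · exact .inr (append_nil s).symm

theorem Primitive.length_dvd_of_append_append_eq_wpow {w s t : List α} {m : ℕ}
    (hw : Primitive w) (h : s ++ w ++ t = wpow w m) : w.length ∣ s.length := by
  induction m generalizing s t with
  | zero => simp [wpow_zero, hw.1] at h
  | succ m ih =>
    rw [wpow_succ] at h
    have hlen := congrArg length h
    simp only [length_append, length_wpow] at hlen
    by_cases hs : w.length ≤ s.length
    · obtain ⟨s', rfl⟩ : w <+: s :=
        prefix_of_prefix_length_le (prefix_append _ _) ⟨w ++ t, by rw [← append_assoc, h]⟩ hs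
      rw [length_append]
      refine Nat.dvd_add_right (dvd_refl _) |>.mpr (ih (t := t) ?_)
      simpa only [append_assoc, append_cancel_left_eq] using h
    · cases m with
      | zero => rw [show s.length = 0 by simp at hlen; omega]; exact dvd_zero _
      | succ m =>
        rw [wpow_succ, ← append_assoc] at h
        have hpre : s ++ w <+: w ++ w :=
          prefix_of_prefix_length_le ⟨t, h⟩ (prefix_append _ _) (by simp; omega)
        rcases hw.eq_nil_or_eq_of_append_prefix hpre with rfl | rfl
        · exact dvd_zero _
        · exact absurd le_rfl hs

theorem infix_of_append_append_eq {s z t p q r : List α} (h : s ++ z ++ t = p ++ q ++ r)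
    (hs : s.length ≤ p.length) (hq : p.length + q.length ≤ s.length + z.length) :
    q <:+: z := by
  obtain ⟨p', rfl⟩ : s <+: p :=
    prefix_of_prefix_length_le (l₃ := p ++ q ++ r) ⟨z ++ t, by rw [← append_assoc, h]⟩
      ⟨q ++ r, by rw [append_assoc]⟩ hs
  simp only [append_assoc, append_cancel_left_eq] at h
  have : p' ++ q <+: z :=
    prefix_of_prefix_length_le ⟨r, by rw [h, append_assoc]⟩ (prefix_append z t)
      (by simp only [length_append] at hq ⊢; omega)
  exact (suffix_append p' q).isInfix.trans this.isInfix

theorem wpow_infix_of_append_append_eq_wpow {w s z t : List α} {m : ℕ}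
    (h : s ++ z ++ t = wpow w m) :
    wpow w ((s.length + z.length) / w.length - s.length ⌈/⌉ w.length) <:+: z := by
  set n := w.length
  set a := s.length ⌈/⌉ n
  set b := (s.length + z.length) / n
  rcases le_or_gt b a with hba | hab
  · rw [Nat.sub_eq_zero_of_le hba, wpow_zero]
    exact nil_infix
  have hn : 0 < n := Nat.pos_of_ne_zero fun h0 => by simp [b, h0] at hab
  have hlen := congrArg length h
  simp only [length_append, length_wpow] at hlen
  have hbm : b ≤ m := (Nat.div_le_iff_le_mul_add_pred hn).mpr (by nlinarith)
  have hsplit : wpow w m = wpow w a ++ wpow w (b - a) ++ wpow w (m - b) := by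
    rw [← wpow_add, ← wpow_add]; congr 1; omega
  refine infix_of_append_append_eq (h.trans hsplit) ?_ ?_
  · simpa [length_wpow, Nat.mul_comm] using le_smul_ceilDiv (b := s.length) hn
  · rw [length_wpow, length_wpow, ← Nat.add_mul, Nat.add_sub_cancel' hab.le]
    exact Nat.div_mul_le_self _ _

theorem Primitive.le_of_wpow_infix {w s z t : List α} {m k : ℕ} (hw : Primitive w)
    (h : s ++ z ++ t = wpow w m) (hk : wpow w k <:+: z) :
    k ≤ (s.length + z.length) / w.length - s.length ⌈/⌉ w.length := by
  have hn : 0 < w.length := length_pos_iff.mpr hw.1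
  rcases k with _ | k
  · exact Nat.zero_le _
  obtain ⟨s', t', rfl⟩ := hk
  obtain ⟨c, hc⟩ : w.length ∣ (s ++ s').length := by
    refine hw.length_dvd_of_append_append_eq_wpow (t := wpow w k ++ t' ++ t) (m := m) ?_
    rw [← h, wpow_succ]; simp only [append_assoc]
  simp only [length_append, length_wpow] at hc ⊢
  have hac : s.length ⌈/⌉ w.length ≤ c := (ceilDiv_le_iff_le_mul hn).mpr (by omega)
  have hcb : c + (k + 1) ≤ (s.length + (s'.length + (k + 1) * w.length + t'.length)) / w.length :=
    (Nat.le_div_iff_mul_le hn).mpr (by rw [Nat.add_mul, Nat.mul_comm c]; omega)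
  omega

theorem Primitive.expw_eq_of_append_append_eq_wpow {w s z t : List α} {m : ℕ}
    (hw : Primitive w) (h : s ++ z ++ t = wpow w m) :
    expw w z = (s.length + z.length) / w.length - s.length ⌈/⌉ w.length :=
  IsGreatest.csSup_eq ⟨wpow_infix_of_append_append_eq_wpow h,
    fun _ hk => hw.le_of_wpow_infix h hk⟩

end Words

theorem Nat.div_sub_ceilDiv_eq_or_eq_succ {n i j l : ℕ} (hij : i ≤ j) (hjl : j ≤ l) :
    l / n - i ⌈/⌉ n = (j / n - i ⌈/⌉ n) + (l / n - j ⌈/⌉ n) ∨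
      l / n - i ⌈/⌉ n = (j / n - i ⌈/⌉ n) + (l / n - j ⌈/⌉ n) + 1 := by
  rcases Nat.eq_zero_or_pos n with rfl | hn
  · simp
  have hi : i ⌈/⌉ n ≤ j ⌈/⌉ n := Nat.div_le_div_right (by omega)
  have hdiv : j / n ≤ l / n := Nat.div_le_div_right hjl
  have hfloor : j / n ≤ j ⌈/⌉ n := Nat.div_le_div_right (by omega)
  have hceil : j ⌈/⌉ n ≤ j / n + 1 :=
    (ceilDiv_le_iff_le_mul hn).mpr (Nat.lt_mul_div_succ j hn).le
  omega

theorem stmt_3 {α : Type*} (w : List α) (hw : Primitive w) (m : ℕ) (u v : List α)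
    (huv : u ++ v <:+: wpow w m) :
    expw w (u ++ v) = expw w u + expw w v ∨
      expw w (u ++ v) = expw w u + expw w v + 1 := by
  obtain ⟨s, t, h⟩ := huv
  rw [hw.expw_eq_of_append_append_eq_wpow h,
    hw.expw_eq_of_append_append_eq_wpow (s := s) (t := v ++ t) (by simpa using h),
    hw.expw_eq_of_append_append_eq_wpow (s := s ++ u) (t := t) (by simpa using h)]
  simp only [length_append, ← Nat.add_assoc]
  exact Nat.div_sub_ceilDiv_eq_or_eq_succ (Nat.le_add_right _ _) (Nat.le_add_right _ _)
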